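/- For every band B of A, a line H ∈ A separates the two unbounded chambers of B if and only if H is not parallel to the two boundary lines of B; that is, Sep(U_1(B), U_2(B)) is exactly the set of lines of A that are not parallel to the boundary lines of B. -/

import Mathlib

open scoped Classical

noncomputable section

abbrev Pt : Type := ℝ × ℝ

/-- An affine-linear functional `a*x + b*y + c` on `ℝ²` with nonzero linear part. -/
structure AffForm : Type where
  a : ℝ
  b : ℝ
  c : ℝ
  nondeg : a ≠ 0 ∨ b ≠ 0

namespace AffForm

def eval (f : AffForm) (p : Pt) : ℝ := f.a * p.1 + f.b * p.2 + f.c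

def line (f : AffForm) : Set Pt := {p | f.eval p = 0}

def Parallel (f g : AffForm) : Prop := f.a * g.b = f.b * g.a

end AffForm

variable {n : ℕ}

/-- An arrangement: at least two distinct affine lines, not all parallel. -/
def IsArrangement (α : Fin n → AffForm) : Prop :=
  2 ≤ n ∧ (∀ i j : Fin n, i ≠ j → (α i).line ≠ (α j).line) ∧
    ∃ i j : Fin n, ¬ (α i).Parallel (α j)

def complement (α : Fin n → AffForm) : Set Pt := {p | ∀ i, (α i).eval p ≠ 0}

/-- A chamber: a connected component of the complement of the union of the lines. -/
def IsChamber (α : Fin n → AffForm) (C : Set Pt) : Prop :=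
  ∃ p ∈ complement α, C = connectedComponentIn (complement α) p

/-- `Sep(C, C')`: the set of indices `i` such that `α i` is positive on one of `C, C'`
and negative on the other. -/
def SepSet (α : Fin n → AffForm) (C C' : Set Pt) : Finset (Fin n) :=
  Finset.univ.filter fun i =>
    ((∀ p ∈ C, 0 < (α i).eval p) ∧ (∀ p ∈ C', (α i).eval p < 0)) ∨
    ((∀ p ∈ C, (α i).eval p < 0) ∧ (∀ p ∈ C', 0 < (α i).eval p))

/-- `Δ(C, C') = ∏_{i ∈ Sep(C,C')} r i − ∏_{i ∈ Sep(C,C')} (r i)⁻¹`. -/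
def Delta (α : Fin n → AffForm) (r : Fin n → ℂ) (C C' : Set Pt) : ℂ :=
  (∏ i ∈ SepSet α C C', r i) - ∏ i ∈ SepSet α C C', (r i)⁻¹

/-- The open strip between two parallel lines `f.line` and `g.line`. -/
def Strip (f g : AffForm) : Set Pt :=
  {p | ∀ q ∈ g.line,
    (0 < f.eval p ∧ f.eval p < f.eval q) ∨ (f.eval q < f.eval p ∧ f.eval p < 0)}

/-- A band: the open strip between two parallel lines of the arrangement containing no
other line of the arrangement parallel to them. -/
def IsBand (α : Fin n → AffForm) (B : Set Pt) : Prop :=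
  ∃ i j : Fin n, i ≠ j ∧ (α i).Parallel (α j) ∧ B = Strip (α i) (α j) ∧
    ∀ k : Fin n, (α k).Parallel (α i) → (α k).line ∩ B = ∅

/-- The data of a band `B` bounded by the parallel lines `H i` and `H j`, together with its
two unbounded chambers `U1` (= `U_1(B)`) and `U2` (= `U_2(B)`). -/
def BandData (α : Fin n → AffForm) (i j : Fin n) (B U1 U2 : Set Pt) : Prop :=
  i ≠ j ∧ (α i).Parallel (α j) ∧ B = Strip (α i) (α j) ∧
  (∀ k : Fin n, (α k).Parallel (α i) → (α k).line ∩ B = ∅) ∧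
  IsChamber α U1 ∧ IsChamber α U2 ∧ U1 ⊆ B ∧ U2 ⊆ B ∧
  ¬ Bornology.IsBounded U1 ∧ ¬ Bornology.IsBounded U2 ∧ U1 ≠ U2

/-!
Let `f = α i`. On the band `|f|` is bounded, so an unbounded chamber inside it contains points
arbitrarily far along the band, i.e. with `|f.perp|` large. A line `g` not parallel to `f` is,
on the band, `f.cross g / ‖(f.a, f.b)‖²` times `f.perp` plus a bounded term, so far out it has
the sign of `f.cross g * f.perp`: opposite signs at the two ends. Each end is convex and misses
every line, so the two distinct unbounded chambers sit at opposite ends and every such `g`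
separates them; a line parallel to `f` misses the convex band and keeps one sign on it.
-/

namespace AffForm

variable (f g : AffForm)

lemma continuous_eval : Continuous f.eval := by
  unfold eval; fun_prop

lemma eval_add_smul (p q : Pt) {a b : ℝ} (hab : a + b = 1) :
    f.eval (a • p + b • q) = a * f.eval p + b * f.eval q := by
  simp only [eval, Prod.fst_add, Prod.snd_add, Prod.smul_fst, Prod.smul_snd, smul_eq_mul]
  linear_combination -f.c * hab

lemma convex_preimage_eval {s : Set ℝ} (hs : Convex ℝ s) : Convex ℝ (f.eval ⁻¹' s) := by
  intro p hp q hq a b ha hb hab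
  simpa only [Set.mem_preimage, eval_add_smul f p q hab, smul_eq_mul] using hs hp hq ha hb hab

lemma line_nonempty : f.line.Nonempty := by
  rcases f.nondeg with h | h
  · exact ⟨(-f.c / f.a, 0), by simp only [line, eval, Set.mem_ofPred_eq]; field_simp; ring⟩
  · exact ⟨(0, -f.c / f.b), by simp only [line, eval, Set.mem_ofPred_eq]; field_simp; ring⟩

lemma convex_strip : Convex ℝ (Strip f g) := by
  intro p hp p' hp' a b ha hb hab q hq
  have hS : Convex ℝ {x : ℝ | (0 < x ∧ x < f.eval q) ∨ (f.eval q < x ∧ x < 0)} := by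
    refine Set.OrdConnected.convex ⟨?_⟩
    rintro x (⟨hx0, hxq⟩ | ⟨hqx, hx0⟩) y (⟨hy0, hyq⟩ | ⟨hqy, hy0⟩) z ⟨hxz, hzy⟩ <;>
      first
      | exact Or.inl ⟨by linarith, by linarith⟩
      | exact Or.inr ⟨by linarith, by linarith⟩
  exact f.convex_preimage_eval hS (hp q hq) (hp' q hq) ha hb hab

lemma abs_eval_le_of_mem_strip {p q : Pt} (hp : p ∈ Strip f g) (hq : q ∈ g.line) :
    |f.eval p| ≤ |f.eval q| := by
  rcases hp q hq with ⟨h0, hq⟩ | ⟨hq, h0⟩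
  · rw [abs_of_pos h0, abs_of_pos (h0.trans hq)]; exact hq.le
  · rw [abs_of_neg h0, abs_of_neg (hq.trans h0)]; linarith

/-- `f.perp.eval` is a coordinate along the lines `f = const`. -/
def perp : AffForm where
  a := -f.b
  b := f.a
  c := 0
  nondeg := f.nondeg.symm.imp neg_ne_zero.2 id

/-- The rate of change of `g` along the lines `f = const`; it vanishes iff `g ∥ f`. -/
def cross : ℝ := f.a * g.b - f.b * g.a

lemma normSq_pos : 0 < f.a ^ 2 + f.b ^ 2 := by
  rcases f.nondeg with h | h <;> positivity

lemma isBounded_of_abs_le {U : Set Pt} {M T : ℝ} (hM : ∀ p ∈ U, |f.eval p| ≤ M)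
    (hT : ∀ p ∈ U, |f.perp.eval p| ≤ T) : Bornology.IsBounded U := by
  set D := f.a ^ 2 + f.b ^ 2
  have hD : D ≠ 0 := f.normSq_pos.ne'
  -- `ψ` inverts `p ↦ (f.eval p, f.perp.eval p)`, so `U` lies in the image of a compact box.
  let ψ : ℝ × ℝ → Pt := fun st =>
    ((f.a * (st.1 - f.c) - f.b * st.2) / D, (f.b * (st.1 - f.c) + f.a * st.2) / D)
  have hψ : Continuous ψ := by fun_prop
  refine ((isCompact_Icc.prod isCompact_Icc).image (s := Set.Icc (-M) M ×ˢ Set.Icc (-T) T)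
    hψ).isBounded.subset fun p hp => ⟨(f.eval p, f.perp.eval p), ⟨abs_le.1 (hM p hp),
    abs_le.1 (hT p hp)⟩, ?_⟩
  simp only [ψ, eval, perp, Prod.ext_iff]
  constructor <;> field_simp <;> ring

lemma exists_lt_abs_perp_eval {U : Set Pt} {M : ℝ} (hM : ∀ p ∈ U, |f.eval p| ≤ M)
    (hU : ¬ Bornology.IsBounded U) (T : ℝ) : ∃ p ∈ U, T < |f.perp.eval p| := by
  by_contra! h
  exact hU (f.isBounded_of_abs_le hM h)

lemma normSq_mul_eval (p : Pt) :
    (f.a ^ 2 + f.b ^ 2) * g.eval p = (f.a * g.a + f.b * g.b) * (f.eval p - f.c)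
      + f.cross g * f.perp.eval p + (f.a ^ 2 + f.b ^ 2) * g.c := by
  simp only [eval, perp, cross]; ring

lemma cross_ne_zero (hgf : ¬ g.Parallel f) : f.cross g ≠ 0 := by
  intro h
  apply hgf
  simp only [Parallel, cross] at h ⊢
  linarith

lemma eventually_pos_mul_eval (hgf : ¬ g.Parallel f) (M : ℝ) :
    ∀ᶠ T in Filter.atTop, ∀ p, |f.eval p| ≤ M → T < |f.perp.eval p| →
      0 < f.cross g * f.perp.eval p * g.eval p := by
  set D := f.a ^ 2 + f.b ^ 2
  have hD : 0 < D := f.normSq_pos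
  set A := f.a * g.a + f.b * g.b
  set E := |A| * (M + |f.c|) + D * |g.c|
  have hμ : 0 < |f.cross g| := abs_pos.2 (f.cross_ne_zero g hgf)
  refine Filter.eventually_atTop.2 ⟨E / |f.cross g|, fun T hT p hpM hpT => ?_⟩
  set u := f.cross g * f.perp.eval p
  set X := A * (f.eval p - f.c) + D * g.c
  have hX : |X| ≤ E := by
    have hfc : |f.eval p - f.c| ≤ M + |f.c| := (abs_sub _ _).trans (by gcongr)
    calc |X| ≤ |A| * |f.eval p - f.c| + D * |g.c| := by
            rw [← abs_of_pos hD, ← abs_mul, ← abs_mul]; exact abs_add_le _ _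
      _ ≤ |A| * (M + |f.c|) + D * |g.c| := by gcongr
  have hu : E < |u| := by
    calc E ≤ |f.cross g| * T := by rwa [div_le_iff₀' hμ] at hT
      _ < |u| := by rw [abs_mul]; gcongr
  have hXu : |X| < |u| := hX.trans_lt hu
  have hpos : 0 < u * (X + u) := by
    have hXu' : -(|u| * |X|) ≤ u * X := by rw [← abs_mul]; exact neg_abs_le _
    nlinarith [abs_mul_abs_self u, mul_lt_mul_of_pos_left hXu ((abs_nonneg X).trans_lt hXu)]
  have hDu : D * (u * g.eval p) = u * (X + u) := by
    rw [mul_left_comm, f.normSq_mul_eval g p]; ring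
  exact pos_of_mul_pos_right (hDu ▸ hpos) hD.le

end AffForm

lemma IsPreconnected.mul_pos_of_ne_zero {X : Type*} [TopologicalSpace X] {s : Set X}
    (hs : IsPreconnected s) {g : X → ℝ} (hg : ContinuousOn g s) (h0 : ∀ x ∈ s, g x ≠ 0)
    {x y : X} (hx : x ∈ s) (hy : y ∈ s) : 0 < g x * g y := by
  have hIVT : ∀ {x y}, x ∈ s → y ∈ s → g x < 0 → ¬ 0 < g y := fun hx hy hgx hgy => by
    obtain ⟨z, hz, hz0⟩ := hs.intermediate_value hx hy hg ⟨hgx.le, hgy.le⟩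
    exact h0 z hz hz0
  rcases (h0 x hx).lt_or_gt with hgx | hgx <;> rcases (h0 y hy).lt_or_gt with hgy | hgy
  · exact mul_pos_of_neg_of_neg hgx hgy
  · exact absurd hgy (hIVT hx hy hgx)
  · exact absurd hgx (hIVT hy hx hgy)
  · exact mul_pos hgx hgy

section Chambers

variable {α : Fin n → AffForm} {C C' : Set Pt}

lemma IsChamber.eq_connectedComponentIn (hC : IsChamber α C) {p : Pt} (hp : p ∈ C) :
    C = connectedComponentIn (complement α) p := by
  obtain ⟨p₀, -, rfl⟩ := hC
  exact connectedComponentIn_eq hp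

lemma IsChamber.isPreconnected (hC : IsChamber α C) : IsPreconnected C := by
  obtain ⟨p₀, -, rfl⟩ := hC
  exact isPreconnected_connectedComponentIn

lemma IsChamber.subset_complement (hC : IsChamber α C) : C ⊆ complement α := by
  obtain ⟨p₀, -, rfl⟩ := hC
  exact connectedComponentIn_subset _ _

lemma IsChamber.eq_of_isPreconnected (hC : IsChamber α C) (hC' : IsChamber α C')
    {S : Set Pt} (hS : IsPreconnected S) (hSα : S ⊆ complement α) {p q : Pt}
    (hpS : p ∈ S) (hqS : q ∈ S) (hp : p ∈ C) (hq : q ∈ C') : C = C' := by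
  rw [hC.eq_connectedComponentIn hp, hC'.eq_connectedComponentIn hq]
  exact connectedComponentIn_eq (hS.subset_connectedComponentIn hpS hSα hqS)

lemma IsChamber.mul_pos (hC : IsChamber α C) (k : Fin n) {p p' : Pt} (hp : p ∈ C)
    (hp' : p' ∈ C) : 0 < (α k).eval p * (α k).eval p' :=
  hC.isPreconnected.mul_pos_of_ne_zero (α k).continuous_eval.continuousOn
    (fun _ hx => hC.subset_complement hx k) hp hp'

lemma mem_sepSet_iff (hC : IsChamber α C) (hC' : IsChamber α C') {p q : Pt} (hp : p ∈ C)
    (hq : q ∈ C') (k : Fin n) : k ∈ SepSet α C C' ↔ (α k).eval p * (α k).eval q < 0 := by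
  simp only [SepSet, Finset.mem_filter, Finset.mem_univ, true_and]
  constructor
  · rintro (⟨hpos, hneg⟩ | ⟨hneg, hpos⟩)
    · exact mul_neg_of_pos_of_neg (hpos p hp) (hneg q hq)
    · exact mul_neg_of_neg_of_pos (hneg p hp) (hpos q hq)
  · intro h
    rcases mul_neg_iff.1 h with ⟨hp0, hq0⟩ | ⟨hp0, hq0⟩
    · exact Or.inl ⟨fun x hx => (pos_iff_pos_of_mul_pos (hC.mul_pos k hp hx)).1 hp0,
        fun y hy => (neg_iff_neg_of_mul_pos (hC'.mul_pos k hq hy)).1 hq0⟩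
    · exact Or.inr ⟨fun x hx => (neg_iff_neg_of_mul_pos (hC.mul_pos k hp hx)).1 hp0,
        fun y hy => (pos_iff_pos_of_mul_pos (hC'.mul_pos k hq hy)).1 hq0⟩

end Chambers

def IsSignThreshold (α : Fin n → AffForm) (i : Fin n) (M T : ℝ) : Prop :=
  ∀ k, ¬ (α k).Parallel (α i) → ∀ p, |(α i).eval p| ≤ M → T < |(α i).perp.eval p| →
    0 < (α i).cross (α k) * (α i).perp.eval p * (α k).eval p

lemma eventually_isSignThreshold (α : Fin n → AffForm) (i : Fin n) (M : ℝ) :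
    ∀ᶠ T in Filter.atTop, IsSignThreshold α i M T :=
  Filter.eventually_all.2 fun k => Filter.eventually_imp_distrib_left.2 fun hk =>
    (α i).eventually_pos_mul_eval (α k) hk M

section Band

variable {α : Fin n → AffForm} {i : Fin n} {B : Set Pt} {M T : ℝ}

lemma mem_complement_of_lt_abs_perp_eval
    (hband : ∀ k, (α k).Parallel (α i) → ∀ p ∈ B, (α k).eval p ≠ 0)
    (hBM : ∀ p ∈ B, |(α i).eval p| ≤ M) (hT : IsSignThreshold α i M T) {p : Pt} (hp : p ∈ B)
    (hpT : T < |(α i).perp.eval p|) : p ∈ complement α := by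
  intro k
  by_cases hk : (α k).Parallel (α i)
  · exact hband k hk p hp
  · exact right_ne_zero_of_mul (hT k hk p (hBM p hp) hpT).ne'

/-- Each end of `B` beyond the threshold is convex and meets no line, hence lies in one chamber. -/
lemma perp_eval_mul_neg {U₁ U₂ : Set Pt} (hC₁ : IsChamber α U₁) (hC₂ : IsChamber α U₂)
    (hne : U₁ ≠ U₂) (hU₁B : U₁ ⊆ B) (hU₂B : U₂ ⊆ B) (hB : Convex ℝ B)
    (hband : ∀ k, (α k).Parallel (α i) → ∀ p ∈ B, (α k).eval p ≠ 0)
    (hBM : ∀ p ∈ B, |(α i).eval p| ≤ M) (hT : IsSignThreshold α i M T) (hT₀ : 0 ≤ T)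
    {p₁ p₂ : Pt} (hp₁ : p₁ ∈ U₁) (hp₂ : p₂ ∈ U₂) (hp₁T : T < |(α i).perp.eval p₁|)
    (hp₂T : T < |(α i).perp.eval p₂|) :
    (α i).perp.eval p₁ * (α i).perp.eval p₂ < 0 := by
  have hend : ∀ s : Set ℝ, Convex ℝ s → (∀ x ∈ s, T < |x|) →
      (α i).perp.eval p₁ ∈ s → (α i).perp.eval p₂ ∈ s → False := fun s hs hsT h₁ h₂ =>
    hne (hC₁.eq_of_isPreconnected hC₂
      (hB.inter ((α i).perp.convex_preimage_eval hs)).isPreconnected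
      (fun x hx => mem_complement_of_lt_abs_perp_eval hband hBM hT hx.1 (hsT _ hx.2))
      ⟨hU₁B hp₁, h₁⟩ ⟨hU₂B hp₂, h₂⟩ hp₁ hp₂)
  rcases lt_abs.1 hp₁T with h₁ | h₁ <;> rcases lt_abs.1 hp₂T with h₂ | h₂
  · exact (hend (Set.Ioi T) (convex_Ioi T) (fun x hx => lt_abs.2 (Or.inl hx)) h₁ h₂).elim
  · nlinarith
  · nlinarith
  · exact (hend (Set.Iio (-T)) (convex_Iio (-T))
      (fun x hx => lt_abs.2 (Or.inr (by linarith [Set.mem_Iio.1 hx])))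
      (Set.mem_Iio.2 (by linarith)) (Set.mem_Iio.2 (by linarith))).elim

end Band

theorem statement0_general {n : ℕ} (α : Fin n → AffForm)
    (i j : Fin n) (B U1 U2 : Set Pt) (hB : BandData α i j B U1 U2) :
    SepSet α U1 U2 = Finset.univ.filter fun k : Fin n => ¬ (α k).Parallel (α i) := by
  obtain ⟨-, -, rfl, hband, hC1, hC2, hU1B, hU2B, hU1, hU2, hne⟩ := hB
  have hband' : ∀ k, (α k).Parallel (α i) → ∀ p ∈ Strip (α i) (α j), (α k).eval p ≠ 0 :=
    fun k hk p hp h0 => Set.eq_empty_iff_forall_notMem.1 (hband k hk) p ⟨h0, hp⟩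
  obtain ⟨q, hq⟩ := (α j).line_nonempty
  have hBM : ∀ p ∈ Strip (α i) (α j), |(α i).eval p| ≤ |(α i).eval q| :=
    fun p hp => (α i).abs_eval_le_of_mem_strip (α j) hp hq
  obtain ⟨T, hT0, hT⟩ :=
    ((Filter.eventually_ge_atTop 0).and (eventually_isSignThreshold α i _)).exists
  obtain ⟨p1, hp1, hp1T⟩ := (α i).exists_lt_abs_perp_eval (fun p hp => hBM p (hU1B hp)) hU1 T
  obtain ⟨p2, hp2, hp2T⟩ := (α i).exists_lt_abs_perp_eval (fun p hp => hBM p (hU2B hp)) hU2 T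
  have hends := perp_eval_mul_neg hC1 hC2 hne hU1B hU2B ((α i).convex_strip (α j)) hband' hBM
    hT hT0 hp1 hp2 hp1T hp2T
  ext k
  rw [mem_sepSet_iff hC1 hC2 hp1 hp2, Finset.mem_filter, and_iff_right (Finset.mem_univ k)]
  by_cases hk : (α k).Parallel (α i)
  · have hpos := ((α i).convex_strip (α j)).isPreconnected.mul_pos_of_ne_zero
      (α k).continuous_eval.continuousOn (hband' k hk) (hU1B hp1) (hU2B hp2)
    simp only [hk, not_true_eq_false, iff_false, not_lt, hpos.le]
  · have h1 := hT k hk p1 (hBM p1 (hU1B hp1)) hp1T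
    have h2 := hT k hk p2 (hBM p2 (hU2B hp2)) hp2T
    simp only [hk, not_false_eq_true, iff_true]
    have hprod : 0 < (α i).cross (α k) ^ 2 * ((α i).perp.eval p1 * (α i).perp.eval p2) *
        ((α k).eval p1 * (α k).eval p2) := by
      linear_combination mul_pos h1 h2
    exact neg_of_mul_pos_right hprod (mul_nonpos_of_nonneg_of_nonpos (sq_nonneg _) hends.le)

/-- For every band `B` of `A`, a line `H k ∈ A` separates the two unbounded
chambers `U_1(B)`, `U_2(B)` of `B` if and only if `H k` is not parallel to the boundary
lines of `B`: `Sep(U_1(B), U_2(B))` is exactly the set of lines of `A` that are not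
parallel to the boundary lines of `B`. -/
theorem statement0 {n : ℕ} (α : Fin n → AffForm) (hA : IsArrangement α)
    (i j : Fin n) (B U1 U2 : Set Pt) (hB : BandData α i j B U1 U2) :
    SepSet α U1 U2 = Finset.univ.filter fun k : Fin n => ¬ (α k).Parallel (α i) :=
  statement0_general α i j B U1 U2 hB
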